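/- Let Λ be a row-finite strongly aperiodic k-graph with no sources, and give χ_Λ the topology generated by the sets S(v) = {χ ∈ χ_Λ : v ∈ χ}. Let C ⊆ χ_Λ be a nonempty closed set and write χ_C = ⋃_{χ ∈ C} χ. Then C is irreducible (i.e. C is not the union of two proper closed subsets of itself) if and only if χ_C is a maximal tail of Λ. -/

import Mathlib

set_option autoImplicit false

open scoped Classical

/-- A `k`-graph: a countable small category together with a degree functor
`d : Λ → ℕ^k` satisfying the unique factorization property.  Paths (morphisms)
form a single type; vertices (objects) are identified with the paths of
degree `0`. -/
structure KGraph (k : ℕ) where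
  /-- the type of paths (morphisms) of the `k`-graph -/
  Path : Type
  countable : Countable Path
  nonempty : Nonempty Path
  /-- the range (codomain) vertex of a path -/
  r : Path → Path
  /-- the source (domain) vertex of a path -/
  s : Path → Path
  /-- composition: `comp lam mu` is the path `λμ`, meaningful when `s lam = r mu` -/
  comp : Path → Path → Path
  /-- the degree functor -/
  d : Path → Fin k → ℕ
  d_r : ∀ lam, d (r lam) = 0
  d_s : ∀ lam, d (s lam) = 0
  r_r : ∀ lam, r (r lam) = r lam
  s_r : ∀ lam, s (r lam) = r lam
  r_s : ∀ lam, r (s lam) = s lam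
  s_s : ∀ lam, s (s lam) = s lam
  id_comp : ∀ lam, comp (r lam) lam = lam
  comp_id : ∀ lam, comp lam (s lam) = lam
  r_comp : ∀ lam mu, s lam = r mu → r (comp lam mu) = r lam
  s_comp : ∀ lam mu, s lam = r mu → s (comp lam mu) = s mu
  d_comp : ∀ lam mu, s lam = r mu → d (comp lam mu) = d lam + d mu
  comp_assoc : ∀ lam mu nu, s lam = r mu → s mu = r nu →
    comp (comp lam mu) nu = comp lam (comp mu nu)
  /-- the unique factorization property -/
  factor : ∀ lam (m n : Fin k → ℕ), d lam = m + n →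
    ∃! p : Path × Path, s p.1 = r p.2 ∧ comp p.1 p.2 = lam ∧ d p.1 = m ∧ d p.2 = n

namespace KGraph

variable {k : ℕ}

/-- `v` is a vertex, i.e. an element of `Λ⁰`. -/
def IsVertex (Λ : KGraph k) (v : Λ.Path) : Prop := Λ.d v = 0

/-- `v ≤ w`, i.e. `vΛw ≠ ∅`. -/
def Conn (Λ : KGraph k) (v w : Λ.Path) : Prop := ∃ lam, Λ.r lam = v ∧ Λ.s lam = w

/-- the canonical generator `e i` of `ℕ^k`. -/
def eVec (k : ℕ) (i : Fin k) : Fin k → ℕ := Pi.single i 1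

/-- `Λ` is row-finite: `vΛⁿ` is finite for every vertex `v` and `n ∈ ℕ^k`. -/
def RowFinite (Λ : KGraph k) : Prop :=
  ∀ v, Λ.IsVertex v → ∀ n : Fin k → ℕ, {lam | Λ.r lam = v ∧ Λ.d lam = n}.Finite

/-- `Λ` has no sources: `vΛ^{e i} ≠ ∅` for every vertex `v` and `i`. -/
def NoSources (Λ : KGraph k) : Prop :=
  ∀ v, Λ.IsVertex v → ∀ i : Fin k, ∃ lam, Λ.r lam = v ∧ Λ.d lam = eVec k i

/-- the middle factor `λ(m,n)`: the unique `σ` such that `λ = μστ` with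
`d μ = m`, `d σ = n - m`, `d τ = d λ - n` (junk value if no factorization exists). -/
noncomputable def seg (Λ : KGraph k) (lam : Λ.Path) (m n : Fin k → ℕ) : Λ.Path :=
  if h : ∃ sig, ∃ mu tau, Λ.s mu = Λ.r sig ∧ Λ.s sig = Λ.r tau ∧
      Λ.comp (Λ.comp mu sig) tau = lam ∧ Λ.d mu = m ∧ Λ.d sig = n - m ∧
      Λ.d tau = Λ.d lam - n
  then h.choose else lam

/-- `Λ` has no local periodicity at the vertex `v`. -/
def NoLocalPeriodicity (Λ : KGraph k) (v : Λ.Path) : Prop :=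
  ∀ m n : Fin k → ℕ, m ≠ n →
    ∃ lam, Λ.r lam = v ∧ m ⊔ n ≤ Λ.d lam ∧
      Λ.seg lam m (m + Λ.d lam - (m ⊔ n)) ≠ Λ.seg lam n (n + Λ.d lam - (m ⊔ n))

/-- `Λ` is aperiodic: no vertex has local periodicity. -/
def Aperiodic (Λ : KGraph k) : Prop := ∀ v, Λ.IsVertex v → Λ.NoLocalPeriodicity v

/-- a hereditary set of vertices -/
def Hereditary (Λ : KGraph k) (H : Set Λ.Path) : Prop :=
  ∀ v ∈ H, ∀ w, Λ.Conn v w → w ∈ H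

/-- a saturated set of vertices -/
def Saturated (Λ : KGraph k) (H : Set Λ.Path) : Prop :=
  ∀ v, Λ.IsVertex v → (∃ mu, Λ.r mu = v) →
    (∃ i : Fin k, ∀ lam, Λ.r lam = v → Λ.d lam = eVec k i → Λ.s lam ∈ H) → v ∈ H

/-- the saturation of a set of vertices: the smallest saturated set containing it -/
def saturation (Λ : KGraph k) (H : Set Λ.Path) : Set Λ.Path :=
  ⋂₀ {K : Set Λ.Path | H ⊆ K ∧ Λ.Saturated K}

/-- no local periodicity at the vertex `v` of the quotient graph `Γ(Λ \ H)`
(whose paths are the paths of `Λ` with source outside `H`). -/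
def QuotNoLocalPeriodicity (Λ : KGraph k) (H : Set Λ.Path) (v : Λ.Path) : Prop :=
  ∀ m n : Fin k → ℕ, m ≠ n →
    ∃ lam, Λ.r lam = v ∧ Λ.s lam ∉ H ∧ m ⊔ n ≤ Λ.d lam ∧
      Λ.seg lam m (m + Λ.d lam - (m ⊔ n)) ≠ Λ.seg lam n (n + Λ.d lam - (m ⊔ n))

/-- `Λ` is strongly aperiodic: `Γ(Λ \ H)` is aperiodic for every saturated
hereditary proper subset `H ⊊ Λ⁰`. -/
def StronglyAperiodic (Λ : KGraph k) : Prop :=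
  ∀ H : Set Λ.Path, (∀ v ∈ H, Λ.IsVertex v) → Λ.Hereditary H → Λ.Saturated H →
    H ≠ {v | Λ.IsVertex v} →
    ∀ v, Λ.IsVertex v → v ∉ H → Λ.QuotNoLocalPeriodicity H v

/-- a maximal tail -/
def MaximalTail (Λ : KGraph k) (γ : Set Λ.Path) : Prop :=
  γ.Nonempty ∧ (∀ v ∈ γ, Λ.IsVertex v) ∧
  (∀ v₁ ∈ γ, ∀ v₂ ∈ γ, ∃ w ∈ γ, Λ.Conn v₁ w ∧ Λ.Conn v₂ w) ∧
  (∀ v ∈ γ, ∀ i : Fin k, ∃ f, Λ.r f = v ∧ Λ.d f = eVec k i ∧ Λ.s f ∈ γ) ∧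
  (∀ v, Λ.IsVertex v → ∀ w ∈ γ, Λ.Conn v w → v ∈ γ)

end KGraph

namespace KGraph

variable {k : ℕ}

/-- An infinite path in `Λ`: a degree-preserving functor `x : Ω_k → Λ`,
recorded by its values `x(m,n)` for `m ≤ n` in `ℕ^k`. -/
structure InfinitePath (Λ : KGraph k) where
  toFun : (Fin k → ℕ) → (Fin k → ℕ) → Λ.Path
  d_eq : ∀ m n : Fin k → ℕ, m ≤ n → Λ.d (toFun m n) = n - m
  r_eq : ∀ m n : Fin k → ℕ, m ≤ n → Λ.r (toFun m n) = toFun m m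
  s_eq : ∀ m n : Fin k → ℕ, m ≤ n → Λ.s (toFun m n) = toFun n n
  comp_eq : ∀ m n p : Fin k → ℕ, m ≤ n → n ≤ p →
    Λ.comp (toFun m n) (toFun n p) = toFun m p

/-- `β(x) = {v ∈ Λ⁰ : vΛx(n,n) ≠ ∅ for some n ∈ ℕ^k}`. -/
def tailOf (Λ : KGraph k) (x : Λ.InfinitePath) : Set Λ.Path :=
  {v | Λ.IsVertex v ∧ ∃ n : Fin k → ℕ, Λ.Conn v (x.toFun n n)}

/-- the cylinder set `Z(μ) = {x ∈ Λ^∞ : x(0, d(μ)) = μ}`. -/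
def cyl (Λ : KGraph k) (mu : Λ.Path) : Set Λ.InfinitePath :=
  {x | x.toFun 0 (Λ.d mu) = mu}

/-- the topology on `Λ^∞` generated by the cylinder sets -/
instance instTopInfinitePath (Λ : KGraph k) : TopologicalSpace Λ.InfinitePath :=
  TopologicalSpace.generateFrom {U | ∃ mu : Λ.Path, U = Λ.cyl mu}

/-- `χ_Λ`, the set of maximal tails of `Λ` -/
def MaxTail (Λ : KGraph k) : Type := {γ : Set Λ.Path // Λ.MaximalTail γ}

/-- `S(v) = {χ ∈ χ_Λ : v ∈ χ}`. -/
def Sv (Λ : KGraph k) (v : Λ.Path) : Set Λ.MaxTail := {χ | v ∈ χ.1}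

/-- the topology on `χ_Λ` generated by the sets `S(v)`, `v ∈ Λ⁰` -/
instance instTopMaxTail (Λ : KGraph k) : TopologicalSpace Λ.MaxTail :=
  TopologicalSpace.generateFrom {U | ∃ v, Λ.IsVertex v ∧ U = Λ.Sv v}

end KGraph

/-!
Every open set of `χ_Λ` is a union of basic sets `⋂_{v ∈ F} S(v)` with `F` finite. Since a
maximal tail is directed and closed under predecessors, a closed set `D` contains every maximal
tail `χ ⊆ ⋃_{χ' ∈ D} χ'`. Hence if `χ_C` is a maximal tail, it is a point of `C` whose
closure is all of `C`, and `C` is irreducible. Conversely, conditions (b) and (c) pass to unions,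
and if `v₁, v₂ ∈ χ_C` had no common successor in `χ_C`, then `C` would be the union of the proper
closed subsets `C \ S(v₁)` and `C \ S(v₂)`.
-/

namespace KGraph

variable {k : ℕ} {Λ : KGraph k}

lemma Conn.trans {u v w : Λ.Path} (huv : Λ.Conn u v) (hvw : Λ.Conn v w) : Λ.Conn u w := by
  obtain ⟨lam, rfl, hs⟩ := huv
  obtain ⟨mu, hr, rfl⟩ := hvw
  have h : Λ.s lam = Λ.r mu := hs.trans hr.symm
  exact ⟨Λ.comp lam mu, Λ.r_comp lam mu h, Λ.s_comp lam mu h⟩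

lemma MaximalTail.exists_conn_of_finset {γ : Set Λ.Path} (hγ : Λ.MaximalTail γ)
    (F : Finset Λ.Path) (hF : ↑F ⊆ γ) : ∃ w ∈ γ, ∀ v ∈ F, Λ.Conn v w := by
  induction F using Finset.induction with
  | empty =>
    obtain ⟨w, hw⟩ := hγ.1
    exact ⟨w, hw, by simp⟩
  | @insert v F _ ih =>
    rw [Finset.coe_insert, Set.insert_subset_iff] at hF
    obtain ⟨w, hwγ, hw⟩ := ih hF.2
    obtain ⟨w', hw'γ, hvw', hww'⟩ := hγ.2.2.1 v hF.1 w hwγ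
    refine ⟨w', hw'γ, fun u hu => ?_⟩
    rcases Finset.mem_insert.mp hu with rfl | hu
    · exact hvw'
    · exact (hw u hu).trans hww'

lemma isOpen_Sv {v : Λ.Path} (hv : Λ.IsVertex v) : IsOpen (Λ.Sv v) :=
  TopologicalSpace.GenerateOpen.basic _ ⟨v, hv, rfl⟩

lemma exists_finset_of_isOpen {U : Set Λ.MaxTail} (hU : IsOpen U) {χ : Λ.MaxTail}
    (hχ : χ ∈ U) : ∃ F : Finset Λ.Path, ↑F ⊆ χ.1 ∧ ∀ χ' : Λ.MaxTail, ↑F ⊆ χ'.1 → χ' ∈ U := by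
  induction hU generalizing χ with
  | basic V hV =>
    obtain ⟨v, -, rfl⟩ := hV
    exact ⟨{v}, by simpa [Sv] using hχ, fun χ' h => h (Finset.mem_singleton_self v)⟩
  | univ => exact ⟨∅, by simp, fun _ _ => trivial⟩
  | inter U₁ U₂ _ _ ih₁ ih₂ =>
    obtain ⟨F₁, hF₁, hU₁⟩ := ih₁ hχ.1
    obtain ⟨F₂, hF₂, hU₂⟩ := ih₂ hχ.2
    refine ⟨F₁ ∪ F₂, by simp [hF₁, hF₂], fun χ' h => ?_⟩
    rw [Finset.coe_union, Set.union_subset_iff] at h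
    exact ⟨hU₁ χ' h.1, hU₂ χ' h.2⟩
  | sUnion S _ ih =>
    obtain ⟨V, hVS, hχV⟩ := hχ
    obtain ⟨F, hF, hV⟩ := ih V hVS hχV
    exact ⟨F, hF, fun χ' h => ⟨V, hVS, hV χ' h⟩⟩

lemma mem_of_isClosed_of_subset_biUnion {D : Set Λ.MaxTail} (hD : IsClosed D)
    {χ : Λ.MaxTail} (hχ : χ.1 ⊆ ⋃ χ' ∈ D, χ'.1) : χ ∈ D := by
  by_contra hχD
  obtain ⟨F, hFχ, hF⟩ := exists_finset_of_isOpen hD.isOpen_compl hχD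
  obtain ⟨w, hwχ, hw⟩ := χ.2.exists_conn_of_finset F hFχ
  obtain ⟨χ', hχ'D, hwχ'⟩ := Set.mem_iUnion₂.mp (hχ hwχ)
  exact hF χ' (fun v hv => χ'.2.2.2.2.2 v (χ.2.2.1 v (hFχ hv)) w hwχ' (hw v hv)) hχ'D

lemma maximalTail_biUnion {C : Set Λ.MaxTail} (hne : C.Nonempty)
    (hdir : ∀ v₁ ∈ ⋃ χ ∈ C, χ.1, ∀ v₂ ∈ ⋃ χ ∈ C, χ.1,
      ∃ w ∈ ⋃ χ ∈ C, χ.1, Λ.Conn v₁ w ∧ Λ.Conn v₂ w) :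
    Λ.MaximalTail (⋃ χ ∈ C, χ.1) := by
  simp only [MaximalTail, Set.mem_iUnion₂] at hdir ⊢
  refine ⟨?_, ?_, hdir, ?_, ?_⟩
  · obtain ⟨χ, hχ⟩ := hne
    obtain ⟨v, hv⟩ := χ.2.1
    exact ⟨v, Set.mem_biUnion hχ hv⟩
  · rintro v ⟨χ, -, hv⟩
    exact χ.2.2.1 v hv
  · rintro v ⟨χ, hχ, hv⟩ i
    obtain ⟨f, hrf, hdf, hsf⟩ := χ.2.2.2.2.1 v hv i
    exact ⟨f, hrf, hdf, χ, hχ, hsf⟩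
  · rintro v hv w ⟨χ, hχ, hw⟩ hvw
    exact ⟨χ, hχ, χ.2.2.2.2.2 v hv w hw hvw⟩

lemma exists_conn_of_irreducible {C : Set Λ.MaxTail} (hC : IsClosed C)
    (hirr : ¬ ∃ C₁ C₂ : Set Λ.MaxTail, IsClosed C₁ ∧ IsClosed C₂ ∧
      C₁ ⊆ C ∧ C₂ ⊆ C ∧ C₁ ≠ C ∧ C₂ ≠ C ∧ C = C₁ ∪ C₂) :
    ∀ v₁ ∈ ⋃ χ ∈ C, χ.1, ∀ v₂ ∈ ⋃ χ ∈ C, χ.1,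
      ∃ w ∈ ⋃ χ ∈ C, χ.1, Λ.Conn v₁ w ∧ Λ.Conn v₂ w := by
  by_contra! hcon
  obtain ⟨v₁, hv₁, v₂, hv₂, hcon⟩ := hcon
  have proper : ∀ v ∈ ⋃ χ ∈ C, χ.1, IsClosed (C \ Λ.Sv v) ∧ C \ Λ.Sv v ≠ C := by
    intro v hv
    obtain ⟨χ, hχC, hvχ⟩ := Set.mem_iUnion₂.mp hv
    exact ⟨hC.sdiff (isOpen_Sv (χ.2.2.1 v hvχ)),
      fun h => Set.disjoint_left.mp (sdiff_eq_left.mp h) hχC hvχ⟩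
  have hsplit : C = C \ Λ.Sv v₁ ∪ C \ Λ.Sv v₂ := by
    rw [← Set.sdiff_inter, eq_comm, sdiff_eq_left, Set.disjoint_left]
    rintro χ hχC ⟨hv₁χ, hv₂χ⟩
    obtain ⟨w, hwχ, hv₁w, hv₂w⟩ := χ.2.2.2.1 v₁ hv₁χ v₂ hv₂χ
    exact hcon w (Set.mem_biUnion hχC hwχ) hv₁w hv₂w
  exact hirr ⟨_, _, (proper v₁ hv₁).1, (proper v₂ hv₂).1, Set.sdiff_subset, Set.sdiff_subset,
    (proper v₁ hv₁).2, (proper v₂ hv₂).2, hsplit⟩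

end KGraph

theorem stmt18_general {k : ℕ} (Λ : KGraph k) (C : Set Λ.MaxTail) (hne : C.Nonempty)
    (hC : IsClosed C) :
    (¬ ∃ C₁ C₂ : Set Λ.MaxTail, IsClosed C₁ ∧ IsClosed C₂ ∧
        C₁ ⊆ C ∧ C₂ ⊆ C ∧ C₁ ≠ C ∧ C₂ ≠ C ∧ C = C₁ ∪ C₂) ↔
      Λ.MaximalTail (⋃ χ ∈ C, χ.1) := by
  refine ⟨fun hirr => KGraph.maximalTail_biUnion hne (KGraph.exists_conn_of_irreducible hC hirr),
    fun hmt => ?_⟩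
  rintro ⟨C₁, C₂, hC₁, hC₂, hsub₁, hsub₂, hne₁, hne₂, hsplit⟩
  let χC : Λ.MaxTail := ⟨_, hmt⟩
  have hχC : χC ∈ C := KGraph.mem_of_isClosed_of_subset_biUnion hC subset_rfl
  have hC_subset : ∀ D, IsClosed D → χC ∈ D → C ⊆ D := fun D hD hχD χ hχ =>
    KGraph.mem_of_isClosed_of_subset_biUnion hD
      ((Set.subset_biUnion_of_mem hχ).trans (Set.subset_biUnion_of_mem (u := fun χ => χ.1) hχD))
  rcases hsplit ▸ hχC with h | h
  · exact hne₁ (hsub₁.antisymm (hC_subset C₁ hC₁ h))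
  · exact hne₂ (hsub₂.antisymm (hC_subset C₂ hC₂ h))

/-- A nonempty closed `C ⊆ χ_Λ` is irreducible iff `χ_C = ⋃_{χ ∈ C} χ` is a
maximal tail. -/
theorem stmt18 {k : ℕ} (Λ : KGraph k) (hrf : Λ.RowFinite) (hns : Λ.NoSources)
    (hsa : Λ.StronglyAperiodic) (C : Set Λ.MaxTail) (hne : C.Nonempty)
    (hC : IsClosed C) :
    (¬ ∃ C₁ C₂ : Set Λ.MaxTail, IsClosed C₁ ∧ IsClosed C₂ ∧
        C₁ ⊆ C ∧ C₂ ⊆ C ∧ C₁ ≠ C ∧ C₂ ≠ C ∧ C = C₁ ∪ C₂) ↔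
      Λ.MaximalTail (⋃ χ ∈ C, χ.1) :=
  stmt18_general Λ C hne hC
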